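/- arXiv:2007.16029 — 6 statements merged into one kernel-verified Lean document; each statement's English description precedes it below -/
import Mathlib

section
/- Let C be a QC code of length mℓ and index ℓ over F_q with reduced Gröbner basis matrix G̃(x) upper triangular with diagonal entries g_{jj}(x) dividing x^m − 1. Then the F_q-dimension of C equals mℓ − Σ_{j=0}^{ℓ−1} deg(g_{jj}(x)). -/
/-!
Reducing a vector against the rows of the upper triangular matrix `G` one column at a time
(Euclidean division by the diagonal entry `G j j`) shows that, over `F`, the vectors whose `j`-th
entry has degree `< deg G j j` form a complement of the row module `M`, so `F[x]^ℓ / M` has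
dimension `∑ deg G j j`. Since `M` contains `(x^m - 1) F[x]^ℓ`, the quotient of
`(F[x]/(x^m - 1))^ℓ` by the code is isomorphic to `F[x]^ℓ / M`, so the code has the complementary
dimension `mℓ - ∑ deg G j j`.
-/

open Polynomial

theorem Submodule.finrank_map_add_finrank_of_isCompl {K V V' : Type*} [DivisionRing K]
    [AddCommGroup V] [Module K V] [AddCommGroup V'] [Module K V'] [FiniteDimensional K V']
    {π : V →ₗ[K] V'} (hπ : Function.Surjective π) {p q : Submodule K V}
    (hker : LinearMap.ker π ≤ p) (hpq : IsCompl p q) :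
    Module.finrank K (p.map π) + Module.finrank K q = Module.finrank K V' := by
  have hψ : Function.Surjective ((p.map π).mkQ ∘ₗ π) := (p.map π).mkQ_surjective.comp hπ
  have hkerψ : LinearMap.ker ((p.map π).mkQ ∘ₗ π) = p := by
    rw [LinearMap.ker_comp, Submodule.ker_mkQ, Submodule.comap_map_eq_self hker]
  have e : q ≃ₗ[K] V' ⧸ p.map π :=
    (p.quotientEquivOfIsCompl q hpq).symm ≪≫ₗ
      (Submodule.quotEquivOfEq _ _ hkerψ.symm ≪≫ₗ LinearMap.quotKerEquivOfSurjective _ hψ)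
  rw [e.finrank_eq, add_comm, Submodule.finrank_quotient_add_finrank]

namespace AdjoinRoot

variable {F ι : Type*} [Field F] (f : F[X])

noncomputable def mkPi : (ι → F[X]) →ₗ[F] (ι → AdjoinRoot f) :=
  LinearMap.piMap fun _ => (mkₐ f).toLinearMap

@[simp] theorem mkPi_apply (v : ι → F[X]) (j : ι) : mkPi f v j = mk f (v j) := rfl

theorem mkPi_surjective : Function.Surjective (mkPi (ι := ι) f) :=
  Function.Surjective.piMap fun _ => mk_surjective

theorem mem_ker_mkPi {v : ι → F[X]} : v ∈ LinearMap.ker (mkPi f) ↔ ∀ j, f ∣ v j := by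
  simp [funext_iff, mk_eq_zero]

instance : RingHomSurjective (mk f) := ⟨mk_surjective⟩

theorem map_mkPi_span_range {κ : Type*} (v : κ → ι → F[X]) :
    ((Submodule.span F[X] (Set.range v)).restrictScalars F).map (mkPi f) =
      (Submodule.span (AdjoinRoot f) (Set.range fun k => mkPi f (v k))).restrictScalars F := by
  let πₛ : (ι → F[X]) →ₛₗ[mk f] (ι → AdjoinRoot f) :=
    { toFun := mkPi f
      map_add' := map_add _
      map_smul' := fun c v => by ext; simp }
  have h := congrArg ((↑) : Submodule _ _ → Set (ι → AdjoinRoot f))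
    (Submodule.map_span πₛ (Set.range v))
  rw [← Set.range_comp] at h
  exact SetLike.coe_injective h

theorem ker_mkPi_le [Fintype ι] [DecidableEq ι] {M : Submodule F[X] (ι → F[X])}
    (hM : ∀ j, Pi.single j f ∈ M) : LinearMap.ker (mkPi f) ≤ M.restrictScalars F := by
  intro v hv
  choose a ha using (mem_ker_mkPi f).1 hv
  rw [Submodule.restrictScalars_mem, ← Finset.univ_sum_single v]
  refine Submodule.sum_mem _ fun j _ => ?_
  rw [ha j, mul_comm, ← smul_eq_mul, Pi.single_smul']
  exact M.smul_mem _ (hM j)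

theorem finrank_pi [Fintype ι] (hf : f ≠ 0) :
    Module.finrank F (ι → AdjoinRoot f) = f.natDegree * Fintype.card ι := by
  have := (powerBasis hf).finite
  rw [Module.finrank_pi_fintype, (powerBasis hf).finrank, powerBasis_dim]
  simp [mul_comm]

end AdjoinRoot

namespace Matrix

variable {F : Type*} [Field F] {ℓ : ℕ} (G : Matrix (Fin ℓ) (Fin ℓ) F[X])

noncomputable def remainders : Submodule F (Fin ℓ → F[X]) :=
  Submodule.pi Set.univ fun j => degreeLT F (G j j).natDegree

theorem mem_remainders {v : Fin ℓ → F[X]} :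
    v ∈ remainders G ↔ ∀ j, (v j).degree < (G j j).natDegree := by
  simp [remainders, Submodule.mem_pi, mem_degreeLT]

theorem finrank_remainders : Module.finrank F (remainders G) = ∑ j, (G j j).natDegree := by
  let e : remainders G ≃ₗ[F] ∀ j, degreeLT F (G j j).natDegree :=
    { toFun := fun v j => ⟨v.1 j, v.2 j (Set.mem_univ j)⟩
      invFun := fun w => ⟨fun j => w j, fun j _ => (w j).2⟩
      map_add' := fun _ _ => rfl
      map_smul' := fun _ _ => rfl
      left_inv := fun _ => rfl
      right_inv := fun _ => rfl }
  have : ∀ n, Module.Finite F (degreeLT F n) := fun n => .equiv (degreeLTEquiv F n).symm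
  rw [e.finrank_eq, Module.finrank_pi_fintype]
  exact Finset.sum_congr rfl fun j _ =>
    (degreeLTEquiv F _).finrank_eq.trans (Module.finrank_fin_fun F)

variable {G}

theorem sum_smul_apply_of_blockTriangular_id (htri : G.BlockTriangular id)
    {c : Fin ℓ → F[X]} {k : Fin ℓ} (hc : ∀ i < k, c i = 0) :
    (∑ i, c i • G i) k = c k * G k k := by
  rw [Finset.sum_apply, Finset.sum_eq_single k]
  · rfl
  · intro i _ hik
    rcases hik.lt_or_gt with h | h
    · simp [hc i h]
    · simp [htri h]
  · simp

theorem disjoint_span_rows_remainders (htri : G.BlockTriangular id) (hG : ∀ j, G j j ≠ 0) :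
    Disjoint ((Submodule.span F[X] (Set.range G)).restrictScalars F) (remainders G) := by
  rw [Submodule.disjoint_def]
  intro v hv hvr
  obtain ⟨c, rfl⟩ := (Submodule.mem_span_range_iff_exists_fun F[X]).1 hv
  suffices hc : ∀ k, c k = 0 by simp [hc]
  intro k
  induction k using WellFoundedLT.induction with
  | ind k ih =>
    by_contra hck
    have hdeg := (mem_remainders G).1 hvr k
    rw [sum_smul_apply_of_blockTriangular_id htri ih,
      degree_eq_natDegree (mul_ne_zero hck (hG k)), Nat.cast_lt, natDegree_mul hck (hG k)] at hdeg
    omega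

theorem span_rows_sup_remainders_eq_top (htri : G.BlockTriangular id) (hG : ∀ j, G j j ≠ 0) :
    (Submodule.span F[X] (Set.range G)).restrictScalars F ⊔ remainders G = ⊤ := by
  set M := (Submodule.span F[X] (Set.range G)).restrictScalars F
  -- clear the columns left to right: subtracting a multiple of row `k` leaves columns `< k` intact
  have hcols : ∀ n ≤ ℓ, ∀ v : Fin ℓ → F[X],
      (∀ j : Fin ℓ, (j : ℕ) < n → (v j).degree < (G j j).natDegree) →
        v ∈ M ⊔ remainders G := by
    intro n hn
    induction hn using Nat.decreasingInduction with
    | self => exact fun v hv => Submodule.mem_sup_right ((mem_remainders G).2 fun j => hv j j.2)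
    | of_succ n hn ih =>
      intro v hv
      set k : Fin ℓ := ⟨n, hn⟩
      have hrow : (v k / G k k) • G k ∈ M :=
        Submodule.smul_mem _ _ (Submodule.subset_span (Set.mem_range_self k))
      have hred := ih (v - (v k / G k k) • G k) fun j hj => ?_
      · simpa using Submodule.add_mem _ hred (Submodule.mem_sup_left hrow)
      rcases (Nat.lt_succ_iff_lt_or_eq.1 hj) with hj | hj
      · simpa [htri (show id j < id k from hj)] using hv j hj
      · obtain rfl : j = k := Fin.ext hj
        rw [Pi.sub_apply, Pi.smul_apply, smul_eq_mul, mul_comm,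
          ← EuclideanDomain.mod_eq_sub_mul_div, ← degree_eq_natDegree (hG k)]
        exact degree_mod_lt _ (hG k)
  exact eq_top_iff.2 fun v _ => hcols 0 (Nat.zero_le _) v fun j hj => absurd hj (Nat.not_lt_zero _)

theorem isCompl_span_rows_remainders (htri : G.BlockTriangular id) (hG : ∀ j, G j j ≠ 0) :
    IsCompl ((Submodule.span F[X] (Set.range G)).restrictScalars F) (remainders G) :=
  ⟨disjoint_span_rows_remainders htri hG,
    codisjoint_iff.2 (span_rows_sup_remainders_eq_top htri hG)⟩

end Matrix

theorem finrank_span_mk_rows_add_sum_natDegree {F : Type*} [Field F] {ℓ : ℕ} {f : F[X]}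
    (hf : f ≠ 0) {G : Matrix (Fin ℓ) (Fin ℓ) F[X]} (htri : G.BlockTriangular id)
    (hG : ∀ j, G j j ≠ 0) (hker : ∀ j, Pi.single j f ∈ Submodule.span F[X] (Set.range G)) :
    Module.finrank F (Submodule.span (AdjoinRoot f) (Set.range fun i j => AdjoinRoot.mk f (G i j)))
      + ∑ j, (G j j).natDegree = f.natDegree * ℓ := by
  have := (AdjoinRoot.powerBasis hf).finite
  have h := Submodule.finrank_map_add_finrank_of_isCompl (AdjoinRoot.mkPi_surjective f)
    (AdjoinRoot.ker_mkPi_le f hker) (G.isCompl_span_rows_remainders htri hG)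
  rwa [AdjoinRoot.map_mkPi_span_range f G, G.finrank_remainders, AdjoinRoot.finrank_pi f hf,
    Fintype.card_fin] at h

theorem stmt3_general (F : Type*) [Field F] (m ℓ : ℕ) (hm : 0 < m)
    (G : Matrix (Fin ℓ) (Fin ℓ) (Polynomial F))
    -- reduced Gröbner basis conditions
    (htri : ∀ i j : Fin ℓ, j < i → G i j = 0)
    (hdvd : ∀ j : Fin ℓ, G j j ∣ X ^ m - C 1)
    -- the rows of G generate the preimage of C in F[x]^ℓ (which contains (x^m−1)e_j)
    (hker : ∀ j : Fin ℓ, (fun k => if k = j then X ^ m - C 1 else 0) ∈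
      Submodule.span (Polynomial F) (Set.range fun i => G i)) :
    Module.finrank F
      ↥(Submodule.span (AdjoinRoot (X ^ m - C 1 : Polynomial F))
        (Set.range fun i : Fin ℓ => fun j : Fin ℓ => AdjoinRoot.mk (X ^ m - C 1 : Polynomial F) (G i j)))
      = m * ℓ - ∑ j : Fin ℓ, (G j j).natDegree := by
  have hf : (X ^ m - C 1 : F[X]) ≠ 0 := X_pow_sub_C_ne_zero hm 1
  have hG : ∀ j, G j j ≠ 0 := fun j h => hf (zero_dvd_iff.1 (h ▸ hdvd j))
  have h := finrank_span_mk_rows_add_sum_natDegree hf htri hG fun j => by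
    rw [show Pi.single j _ = _ from funext (Pi.single_apply j _)]
    exact hker j
  rw [natDegree_X_pow_sub_C] at h
  omega

theorem stmt3 (F : Type*) [Field F] (m ℓ : ℕ) (hm : 0 < m)
    (G : Matrix (Fin ℓ) (Fin ℓ) (Polynomial F))
    -- reduced Gröbner basis conditions
    (htri : ∀ i j : Fin ℓ, j < i → G i j = 0)
    (hdeg : ∀ i j : Fin ℓ, i < j → (G i j).degree < (G j j).degree)
    (hdvd : ∀ j : Fin ℓ, G j j ∣ X ^ m - C 1)
    (hcol : ∀ j : Fin ℓ, G j j = X ^ m - C 1 → ∀ i : Fin ℓ, i ≠ j → G i j = 0)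
    -- the rows of G generate the preimage of C in F[x]^ℓ (which contains (x^m−1)e_j)
    (hker : ∀ j : Fin ℓ, (fun k => if k = j then X ^ m - C 1 else 0) ∈
      Submodule.span (Polynomial F) (Set.range fun i => G i)) :
    Module.finrank F
      ↥(Submodule.span (AdjoinRoot (X ^ m - C 1 : Polynomial F))
        (Set.range fun i : Fin ℓ => fun j : Fin ℓ => AdjoinRoot.mk (X ^ m - C 1 : Polynomial F) (G i j)))
      = m * ℓ - ∑ j : Fin ℓ, (G j j).natDegree :=
  stmt3_general F m ℓ hm G htri hdvd hker
end

section
/- With gcd(m,q)=1, every QC code C ⊆ R^ℓ of index ℓ decomposes under the CRT isomorphism R^ℓ ≅ E_1^ℓ ⊕ ⋯ ⊕ E_s^ℓ as C ≅ C_1 ⊕ ⋯ ⊕ C_s, where each constituent C_i is a linear code of length ℓ over the field E_i; moreover, if C is generated as an R-module by vectors (a_{b,0}(x),…,a_{b,ℓ−1}(x)), 1 ≤ b ≤ r, then C_i is the E_i-span of the vectors (a_{b,0}(ξ^{u_i}),…,a_{b,ℓ−1}(ξ^{u_i})). -/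
/-!
Distinct monic irreducible factors of `x^m - 1` are pairwise coprime, so reduction modulo them
is the Chinese remainder isomorphism `R ≃ ∏ i, E_i`; applied coordinatewise it identifies `R^ℓ`
with `∏ i, E_i^ℓ`. Being a ring isomorphism, it matches `R`-linear combinations of the generators
with families of `E_i`-linear combinations of their reductions: coefficients are reduced in one
direction and lifted through the Chinese remainder theorem in the other.
-/

open Polynomial

/-- The natural reduction map `F[x]/⟨f₁⟩ → F[x]/⟨f₂⟩` when `f₂ ∣ f₁`. -/
noncomputable def projMod {F : Type*} [Field F] (f₁ f₂ : Polynomial F) (h : f₂ ∣ f₁) :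
    AdjoinRoot f₁ →+* AdjoinRoot f₂ :=
  AdjoinRoot.lift (AdjoinRoot.of f₂) (AdjoinRoot.root f₂) (by
    have h0 : (AdjoinRoot.mk f₂) f₁ = 0 := AdjoinRoot.mk_eq_zero.mpr h
    rwa [← AdjoinRoot.aeval_eq, Polynomial.aeval_def] at h0)

lemma projMod_mk {F : Type*} [Field F] (f₁ f₂ : F[X]) (h : f₂ ∣ f₁) (p : F[X]) :
    projMod f₁ f₂ h (AdjoinRoot.mk f₁ p) = AdjoinRoot.mk f₂ p :=
  (AdjoinRoot.lift_mk _ p).trans (AdjoinRoot.aeval_eq p)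

lemma Polynomial.isCoprime_of_irreducible_of_monic {K : Type*} [Field K] {p q : K[X]}
    (hp : Irreducible p) (hq : Irreducible q) (hpm : p.Monic) (hqm : q.Monic) (hpq : p ≠ q) :
    IsCoprime p q :=
  hp.coprime_iff_not_dvd.mpr fun hdvd =>
    hpq (eq_of_monic_of_associated hpm hqm (hp.associated_of_dvd hq hdvd))

lemma projMod_pi_bijective_of_pairwise_isCoprime {F : Type*} [Field F] {ι : Type*} [Fintype ι]
    (f : ι → F[X]) (g : F[X]) (hcop : Pairwise fun i j => IsCoprime (f i) (f j))
    (hprod : ∏ i, f i = g) (hdvd : ∀ i, f i ∣ g) :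
    Function.Bijective fun (x : AdjoinRoot g) (i : ι) => projMod g (f i) (hdvd i) x := by
  refine ⟨fun x y hxy => ?_, fun y => ?_⟩
  · obtain ⟨p, rfl⟩ := AdjoinRoot.mk_surjective x
    obtain ⟨q, rfl⟩ := AdjoinRoot.mk_surjective y
    rw [AdjoinRoot.mk_eq_mk, ← hprod]
    refine Finset.prod_dvd_of_coprime (fun i _ j _ hij => hcop hij) fun i _ => ?_
    simpa only [projMod_mk, AdjoinRoot.mk_eq_mk] using congrFun hxy i
  · have hcop' : Pairwise fun i j => IsCoprime (Ideal.span {f i}) (Ideal.span {f j}) :=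
      fun i j hij => (Ideal.isCoprime_span_singleton_iff _ _).mpr (hcop hij)
    obtain ⟨p, hp⟩ := Ideal.pi_quotient_surjective hcop' y
    exact ⟨AdjoinRoot.mk g p, funext fun i => (projMod_mk _ _ _ p).trans (hp i)⟩

lemma Submodule.mem_span_range_iff_forall_of_bijective {R : Type*} [CommSemiring R]
    {ι : Type*} {E : ι → Type*} [∀ i, CommSemiring (E i)] (φ : ∀ i, R →+* E i)
    (hφ : Function.Bijective fun x i => φ i x) {α β : Type*} [Fintype β]
    (w : β → α → R) (v : α → R) :
    v ∈ span R (Set.range w) ↔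
      ∀ i, (fun j => φ i (v j)) ∈ span (E i) (Set.range fun b j => φ i (w b j)) := by
  simp only [mem_span_range_iff_exists_fun]
  constructor
  · rintro ⟨c, rfl⟩ i
    exact ⟨fun b => φ i (c b), by ext j; simp [map_sum]⟩
  · intro hv
    choose d hd using hv
    choose c hc using fun b => hφ.2 fun i => d i b
    refine ⟨c, funext fun j => hφ.1 (funext fun i => ?_)⟩
    have hci : ∀ b, φ i (c b) = d i b := fun b => congrFun (hc b) i
    simpa [map_sum, hci] using congrFun (hd i) j

theorem stmt5_general (F : Type*) [Field F] (m ℓ s r : ℕ)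
    -- factorization of x^m − 1 into distinct monic irreducible polynomials
    (f : Fin s → Polynomial F)
    (hirr : ∀ i, Irreducible (f i)) (hmonic : ∀ i, (f i).Monic)
    (hdist : ∀ i j, i ≠ j → f i ≠ f j)
    (hprod : ∏ i, f i = X ^ m - C 1)
    (hdvd : ∀ i, f i ∣ X ^ m - C 1)
    -- generators of the QC code C ⊆ R^ℓ as an R-module
    (a : Fin r → Fin ℓ → Polynomial F) :
    -- the CRT map R^ℓ → E_1^ℓ ⊕ ⋯ ⊕ E_s^ℓ is bijective, and
    Function.Bijective
      (fun (v : Fin ℓ → AdjoinRoot (X ^ m - C 1 : Polynomial F)) =>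
        fun (i : Fin s) (j : Fin ℓ) => projMod _ (f i) (hdvd i) (v j)) ∧
    -- under it, C decomposes into its constituents: v ∈ C iff each component lies in
    -- C_i, where C_i is the E_i-span of the reductions of the generators of C
    (∀ v : Fin ℓ → AdjoinRoot (X ^ m - C 1 : Polynomial F),
      v ∈ Submodule.span (AdjoinRoot (X ^ m - C 1 : Polynomial F))
          (Set.range fun b : Fin r =>
            fun j : Fin ℓ => AdjoinRoot.mk (X ^ m - C 1 : Polynomial F) (a b j)) ↔
      ∀ i : Fin s,
        (fun j : Fin ℓ => projMod _ (f i) (hdvd i) (v j)) ∈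
          Submodule.span (AdjoinRoot (f i))
            (Set.range fun b : Fin r => fun j : Fin ℓ => AdjoinRoot.mk (f i) (a b j))) := by
  have hcop : Pairwise fun i j => IsCoprime (f i) (f j) := fun i j hij =>
    isCoprime_of_irreducible_of_monic (hirr i) (hirr j) (hmonic i) (hmonic j) (hdist i j hij)
  have hcrt := projMod_pi_bijective_of_pairwise_isCoprime f _ hcop hprod hdvd
  refine ⟨(Equiv.piComm _).bijective.comp (.piMap fun _ => hcrt), fun v => ?_⟩
  rw [Submodule.mem_span_range_iff_forall_of_bijective _ hcrt]
  simp only [projMod_mk]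

theorem stmt5 (F : Type*) [Field F] [Fintype F] (m ℓ s r : ℕ) (hm : 0 < m)
    -- gcd(m, q) = 1
    (hmq : (m : F) ≠ 0)
    -- factorization of x^m − 1 into distinct monic irreducible polynomials
    (f : Fin s → Polynomial F)
    (hirr : ∀ i, Irreducible (f i)) (hmonic : ∀ i, (f i).Monic)
    (hdist : ∀ i j, i ≠ j → f i ≠ f j)
    (hprod : ∏ i, f i = X ^ m - C 1)
    (hdvd : ∀ i, f i ∣ X ^ m - C 1)
    -- generators of the QC code C ⊆ R^ℓ as an R-module
    (a : Fin r → Fin ℓ → Polynomial F) :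
    -- the CRT map R^ℓ → E_1^ℓ ⊕ ⋯ ⊕ E_s^ℓ is bijective, and
    Function.Bijective
      (fun (v : Fin ℓ → AdjoinRoot (X ^ m - C 1 : Polynomial F)) =>
        fun (i : Fin s) (j : Fin ℓ) => projMod _ (f i) (hdvd i) (v j)) ∧
    -- under it, C decomposes into its constituents: v ∈ C iff each component lies in
    -- C_i, where C_i is the E_i-span of the reductions of the generators of C
    (∀ v : Fin ℓ → AdjoinRoot (X ^ m - C 1 : Polynomial F),
      v ∈ Submodule.span (AdjoinRoot (X ^ m - C 1 : Polynomial F))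
          (Set.range fun b : Fin r =>
            fun j : Fin ℓ => AdjoinRoot.mk (X ^ m - C 1 : Polynomial F) (a b j)) ↔
      ∀ i : Fin s,
        (fun j : Fin ℓ => projMod _ (f i) (hdvd i) (v j)) ∈
          Submodule.span (AdjoinRoot (f i))
            (Set.range fun b : Fin r => fun j : Fin ℓ => AdjoinRoot.mk (f i) (a b j))) :=
  stmt5_general F m ℓ s r f hirr hmonic hdist hprod hdvd a
end

section
/- (Jensen) Let C_i be a linear code of length ℓ over E_i for each i in a subset I of {1,…,s}, and let ⟨θ_i⟩ be the minimal cyclic code of length m over F_q with check polynomial f_i(x), identified with E_i via the maps φ_i, ψ_i. Then C = ⊕_{i∈I} ⟨θ_i⟩ □ C_i (concatenation applying ψ_i symbolwise) is a q-ary QC code of length mℓ and index dividing ℓ. Conversely, every QC code of length mℓ and index ℓ arises in this way. -/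
/-!
Let `σ` be the cyclic shift of the rows of an `m × ℓ` array, so that a QC code is a
`σ`-invariant subspace, i.e. a module over `F[x]` with `x` acting as `σ`. As the `f i` are
pairwise coprime with product `x^m - 1`, there are polynomials `e i` with `∑ e i = 1` and
`x^m - 1 ∣ e i * f i`. Every codeword `c` then splits as `∑ e i (σ) c`, and each column of
`e i (σ) c` is annihilated by `f i`, so it lies in the minimal code `ψ i (E i)`. Reading
`e i (σ) c` through `ψ i` gives a word over `E i`; these words form the outer code `C i`, which
is `E i`-linear because multiplication by the root of `f i` is the shift, and that root
generates `E i`. Conversely, shifting a concatenated word multiplies every outer word by the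
root, which keeps it in `C i`.
-/

set_option maxHeartbeats 1000000

open Polynomial

/-- The minimal cyclic code of length `m` over `F` with check polynomial `f`:
length-`m` vectors whose polynomial, multiplied by `f`, vanishes mod `x^m − 1`. -/
def minimalCyclicCode (F : Type*) [Field F] (m : ℕ) (f : Polynomial F) :
    Set (Fin m → F) :=
  {v | (X ^ m - C 1) ∣ (∑ k : Fin m, C (v k) * X ^ (k : ℕ)) * f}

/-- The concatenated code `⊕_i ⟨θ_i⟩ □ C_i`, where `ψ i` identifies `E_i` with `⟨θ_i⟩`
and is applied symbolwise to the outer codewords. -/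
def concatCode {F : Type*} [Field F] {m ℓ s : ℕ} {f : Fin s → Polynomial F}
    (ψ : ∀ i, AdjoinRoot (f i) →ₗ[F] (Fin m → F))
    (Cs : ∀ i, Submodule (AdjoinRoot (f i)) (Fin ℓ → AdjoinRoot (f i))) :
    Set (Fin m → Fin ℓ → F) :=
  {c | ∃ lam : ∀ i, Fin ℓ → AdjoinRoot (f i),
    (∀ i, lam i ∈ Cs i) ∧ ∀ k j, c k j = ∑ i, ψ i (lam i j) k}

namespace Module.End

variable {R M N : Type*} [CommRing R] [AddCommGroup M] [Module R M] [AddCommGroup N] [Module R N]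

theorem aeval_apply_mem {f : Module.End R M} {P : Submodule R M} (hP : ∀ x ∈ P, f x ∈ P)
    (p : R[X]) {x : M} (hx : x ∈ P) : aeval f p x ∈ P := by
  have hpow : ∀ n, (f ^ n) x ∈ P := fun n => by
    induction n with
    | zero => exact hx
    | succ n ih => rw [pow_succ', mul_apply]; exact hP _ ih
  induction p using Polynomial.induction_on' with
  | add p q hp hq => rw [map_add, LinearMap.add_apply]; exact P.add_mem hp hq
  | monomial n a =>
    rw [aeval_monomial, mul_apply, Module.algebraMap_end_apply]
    exact P.smul_mem a (hpow n)

theorem aeval_apply_of_comp_eq {g : M →ₗ[R] N} {f₁ : Module.End R M} {f₂ : Module.End R N}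
    (h : f₂ ∘ₗ g = g ∘ₗ f₁) (p : R[X]) (x : M) : g (aeval f₁ p x) = aeval f₂ p (g x) := by
  induction p using Polynomial.induction_on' with
  | add p q hp hq => simp only [map_add, LinearMap.add_apply, hp, hq]
  | monomial n a =>
    simp only [aeval_monomial, mul_apply, Module.algebraMap_end_apply, map_smul]
    rw [← LinearMap.comp_apply, ← commute_pow_left_of_commute h n,
      LinearMap.comp_apply]

end Module.End

section CyclicShift

variable (R M : Type*) [CommRing R] [AddCommGroup M] [Module R M] (m : ℕ) [NeZero m]

def cyclicShift : Module.End R (Fin m → M) := LinearMap.funLeft R M fun k => k - 1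

variable {R M m}

@[simp] theorem cyclicShift_apply (v : Fin m → M) (k : Fin m) :
    cyclicShift R M m v k = v (k - 1) := rfl

theorem aeval_cyclicShift_apply_apply {ι : Type*} (p : R[X]) (c : Fin m → ι → M) (j : ι) :
    (fun k => aeval (cyclicShift R (ι → M) m) p c k j) =
      aeval (cyclicShift R M m) p fun k => c k j :=
  Module.End.aeval_apply_of_comp_eq (g := LinearMap.compLeft (LinearMap.proj j) (Fin m))
    (by ext; rfl) p c

end CyclicShift

section CyclicPoly

variable {R : Type*} [CommRing R] {m : ℕ}

variable (R m) in
noncomputable def cyclicPoly : (Fin m → R) →ₗ[R] AdjoinRoot (X ^ m - C 1 : R[X]) :=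
  Fintype.linearCombination R fun k : Fin m => AdjoinRoot.root (X ^ m - C 1 : R[X]) ^ (k : ℕ)

theorem cyclicPoly_apply (v : Fin m → R) :
    cyclicPoly R m v = ∑ k, v k • AdjoinRoot.root (X ^ m - C 1 : R[X]) ^ (k : ℕ) :=
  Fintype.linearCombination_apply _ _ _

theorem AdjoinRoot.root_X_pow_sub_one_pow_mod (n : ℕ) :
    AdjoinRoot.root (X ^ m - C 1 : R[X]) ^ (n % m) =
      AdjoinRoot.root (X ^ m - C 1 : R[X]) ^ n := by
  have hm : AdjoinRoot.root (X ^ m - C 1 : R[X]) ^ m = 1 := by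
    have h := AdjoinRoot.eval₂_root (X ^ m - C 1 : R[X])
    rwa [eval₂_sub, eval₂_X_pow, eval₂_C, map_one, sub_eq_zero] at h
  conv_rhs => rw [← Nat.mod_add_div n m, pow_add, pow_mul, hm, one_pow, mul_one]

theorem mk_sum_C_mul_X_pow (v : Fin m → R) :
    AdjoinRoot.mk (X ^ m - C 1 : R[X]) (∑ k : Fin m, C (v k) * X ^ (k : ℕ)) =
      cyclicPoly R m v := by
  simp [cyclicPoly_apply, Algebra.smul_def]

variable [NeZero m]

theorem cyclicPoly_cyclicShift (v : Fin m → R) :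
    cyclicPoly R m (cyclicShift R R m v) =
      AdjoinRoot.root (X ^ m - C 1 : R[X]) * cyclicPoly R m v := by
  have hsucc : ∀ k : Fin m, AdjoinRoot.root (X ^ m - C 1 : R[X]) ^ ((k + 1 : Fin m) : ℕ) =
      AdjoinRoot.root (X ^ m - C 1 : R[X]) * AdjoinRoot.root (X ^ m - C 1 : R[X]) ^ (k : ℕ) :=
    fun k => by
      rw [Fin.val_add, Fin.val_one', AdjoinRoot.root_X_pow_sub_one_pow_mod, pow_add,
        AdjoinRoot.root_X_pow_sub_one_pow_mod, pow_one, mul_comm]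
  simp only [cyclicPoly_apply, cyclicShift_apply, Finset.mul_sum]
  rw [← Equiv.sum_comp (Equiv.addRight (1 : Fin m))
      fun k => v (k - 1) • AdjoinRoot.root (X ^ m - C 1 : R[X]) ^ (k : ℕ)]
  simp only [Equiv.coe_addRight, add_sub_cancel_right, hsucc, mul_smul_comm]

theorem cyclicPoly_aeval_cyclicShift (p : R[X]) (v : Fin m → R) :
    cyclicPoly R m (aeval (cyclicShift R R m) p v) = AdjoinRoot.mk _ p * cyclicPoly R m v := by
  rw [Module.End.aeval_apply_of_comp_eq
      (f₂ := Algebra.lmul R _ (AdjoinRoot.root (X ^ m - C 1 : R[X])))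
      (by ext; simp [cyclicPoly_cyclicShift]),
    aeval_algHom_apply, AdjoinRoot.aeval_eq]
  rfl

end CyclicPoly

theorem aeval_cyclicShift_mem_minimalCyclicCode {F : Type*} [Field F] {m : ℕ} [NeZero m]
    {f p : F[X]} (hp : X ^ m - C 1 ∣ p * f) (v : Fin m → F) :
    aeval (cyclicShift F F m) p v ∈ minimalCyclicCode F m f := by
  rw [minimalCyclicCode, Set.mem_ofPred_eq, ← AdjoinRoot.mk_eq_zero, map_mul,
    mk_sum_C_mul_X_pow, cyclicPoly_aeval_cyclicShift, mul_right_comm, ← map_mul,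
    AdjoinRoot.mk_eq_zero.mpr hp, zero_mul]

theorem AdjoinRoot.smul_mem_of_root_smul_mem {R V : Type*} [CommRing R] {f : R[X]}
    [AddCommGroup V] [Module (AdjoinRoot f) V] [Module R V] [IsScalarTower R (AdjoinRoot f) V]
    {P : Submodule R V} (hP : ∀ v ∈ P, root f • v ∈ P) (δ : AdjoinRoot f) {v : V}
    (hv : v ∈ P) : δ • v ∈ P := by
  obtain ⟨p, rfl⟩ := mk_surjective δ
  have h := Module.End.aeval_apply_mem (f := Algebra.lsmul R R V (root f)) hP p hv
  rwa [aeval_algHom_apply, aeval_eq] at h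

theorem exists_sum_eq_one_and_prod_dvd_mul {R ι : Type*} [CommRing R] [Fintype ι] [Nonempty ι]
    {g : ι → R} (hg : Pairwise fun i j => IsCoprime (g i) (g j)) :
    ∃ e : ι → R, ∑ i, e i = 1 ∧ ∀ i, ∏ j, g j ∣ e i * g i := by
  classical
  obtain ⟨μ, hμ⟩ := exists_sum_eq_one_iff_pairwise_coprime'.mpr hg
  refine ⟨fun i => μ i * ∏ j ∈ {i}ᶜ, g j, hμ, fun i => ⟨μ i, ?_⟩⟩
  rw [mul_assoc, Fintype.prod_eq_prod_compl_mul i, mul_comm (μ i)]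

theorem Polynomial.pairwise_isCoprime_of_irreducible_of_monic {K ι : Type*} [Field K]
    {f : ι → K[X]} (hirr : ∀ i, Irreducible (f i)) (hmonic : ∀ i, (f i).Monic)
    (hf : Function.Injective f) : Pairwise fun i j => IsCoprime (f i) (f j) := fun i j hij =>
  (hirr i).coprime_iff_not_dvd.mpr fun hdvd => hij <| hf <|
    eq_of_monic_of_associated (hmonic i) (hmonic j) ((hirr i).associated_of_dvd (hirr j) hdvd)

section Concatenation

variable {F : Type*} [Field F] {m ℓ : ℕ}

def symbolwise {E : Type*} [AddCommGroup E] [Module F E] (φ : E →ₗ[F] (Fin m → F)) :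
    (Fin ℓ → E) →ₗ[F] (Fin m → Fin ℓ → F) where
  toFun v k j := φ (v j) k
  map_add' v w := by ext; simp
  map_smul' a v := by ext; simp

@[simp] theorem symbolwise_apply {E : Type*} [AddCommGroup E] [Module F E]
    (φ : E →ₗ[F] (Fin m → F)) (v : Fin ℓ → E) (k : Fin m) (j : Fin ℓ) :
    symbolwise φ v k j = φ (v j) k := rfl

theorem symbolwise_root_smul [NeZero m] {g : F[X]} {φ : AdjoinRoot g →ₗ[F] (Fin m → F)}
    (hφ : ∀ δ k, φ (AdjoinRoot.root g * δ) k = φ δ (k - 1)) (v : Fin ℓ → AdjoinRoot g) :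
    symbolwise φ (AdjoinRoot.root g • v) = cyclicShift F (Fin ℓ → F) m (symbolwise φ v) := by
  ext k j
  exact hφ (v j) k

noncomputable def outerCode [NeZero m] {g : F[X]} {φ : AdjoinRoot g →ₗ[F] (Fin m → F)}
    (hφ : ∀ δ k, φ (AdjoinRoot.root g * δ) k = φ δ (k - 1)) (D : Submodule F (Fin m → Fin ℓ → F))
    (hD : ∀ c ∈ D, cyclicShift F (Fin ℓ → F) m c ∈ D) :
    Submodule (AdjoinRoot g) (Fin ℓ → AdjoinRoot g) where
  toAddSubmonoid := (D.comap (symbolwise φ)).toAddSubmonoid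
  smul_mem' δ _ hv := AdjoinRoot.smul_mem_of_root_smul_mem (P := D.comap (symbolwise φ))
    (fun v hv => by simpa [symbolwise_root_smul hφ] using hD _ hv) δ hv

theorem mem_outerCode [NeZero m] {g : F[X]} {φ : AdjoinRoot g →ₗ[F] (Fin m → F)}
    (hφ : ∀ δ k, φ (AdjoinRoot.root g * δ) k = φ δ (k - 1)) {D : Submodule F (Fin m → Fin ℓ → F)}
    (hD : ∀ c ∈ D, cyclicShift F (Fin ℓ → F) m c ∈ D) {v : Fin ℓ → AdjoinRoot g} :
    v ∈ outerCode hφ D hD ↔ symbolwise φ v ∈ D :=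
  Iff.rfl

variable {s : ℕ} {f : Fin s → F[X]}

noncomputable def concatMap (ψ : ∀ i, AdjoinRoot (f i) →ₗ[F] (Fin m → F)) :
    (∀ i, Fin ℓ → AdjoinRoot (f i)) →ₗ[F] (Fin m → Fin ℓ → F) :=
  ∑ i, symbolwise (ψ i) ∘ₗ LinearMap.proj i

theorem concatMap_apply (ψ : ∀ i, AdjoinRoot (f i) →ₗ[F] (Fin m → F))
    (lam : ∀ i, Fin ℓ → AdjoinRoot (f i)) :
    concatMap ψ lam = ∑ i, symbolwise (ψ i) (lam i) := by
  simp [concatMap]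

theorem concatCode_eq_image (ψ : ∀ i, AdjoinRoot (f i) →ₗ[F] (Fin m → F))
    (Cs : ∀ i, Submodule (AdjoinRoot (f i)) (Fin ℓ → AdjoinRoot (f i))) :
    concatCode ψ Cs = concatMap ψ '' {lam | ∀ i, lam i ∈ Cs i} := by
  ext c
  simp only [concatCode, Set.mem_image, Set.mem_ofPred_eq, funext_iff]
  refine exists_congr fun lam => and_congr_right fun _ => forall_congr' fun k =>
    forall_congr' fun j => ?_
  simp [concatMap, eq_comm]

theorem concatMap_root_smul [NeZero m] {ψ : ∀ i, AdjoinRoot (f i) →ₗ[F] (Fin m → F)}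
    (hshift : ∀ i δ k, ψ i (AdjoinRoot.root (f i) * δ) k = ψ i δ (k - 1))
    (lam : ∀ i, Fin ℓ → AdjoinRoot (f i)) :
    concatMap ψ (fun i => AdjoinRoot.root (f i) • lam i) =
      cyclicShift F (Fin ℓ → F) m (concatMap ψ lam) := by
  simp [concatMap, symbolwise_root_smul (hshift _)]

theorem exists_submodule_coe_eq_concatCode [NeZero m]
    {ψ : ∀ i, AdjoinRoot (f i) →ₗ[F] (Fin m → F)}
    (hshift : ∀ i δ k, ψ i (AdjoinRoot.root (f i) * δ) k = ψ i δ (k - 1))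
    (Cs : ∀ i, Submodule (AdjoinRoot (f i)) (Fin ℓ → AdjoinRoot (f i))) :
    ∃ D : Submodule F (Fin m → Fin ℓ → F), (D : Set (Fin m → Fin ℓ → F)) = concatCode ψ Cs ∧
      ∀ c ∈ D, cyclicShift F (Fin ℓ → F) m c ∈ D := by
  refine ⟨(Submodule.pi Set.univ fun i => (Cs i).restrictScalars F).map (concatMap ψ), ?_, ?_⟩
  · rw [concatCode_eq_image, Submodule.map_coe]
    simp [Set.ext_iff]
  · rintro _ ⟨lam, hlam, rfl⟩
    exact ⟨_, fun i _ => (Cs i).smul_mem _ (hlam i trivial), concatMap_root_smul hshift lam⟩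

theorem exists_coe_eq_concatCode [NeZero m] {ψ : ∀ i, AdjoinRoot (f i) →ₗ[F] (Fin m → F)}
    (hcop : Pairwise fun i j => IsCoprime (f i) (f j)) (hprod : ∏ i, f i = X ^ m - C 1)
    (hrange : ∀ i, Set.range (ψ i) = minimalCyclicCode F m (f i))
    (hshift : ∀ i δ k, ψ i (AdjoinRoot.root (f i) * δ) k = ψ i δ (k - 1))
    (D : Submodule F (Fin m → Fin ℓ → F)) (hD : ∀ c ∈ D, cyclicShift F (Fin ℓ → F) m c ∈ D) :
    ∃ Cs : ∀ i, Submodule (AdjoinRoot (f i)) (Fin ℓ → AdjoinRoot (f i)),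
      (D : Set (Fin m → Fin ℓ → F)) = concatCode ψ Cs := by
  have : Nonempty (Fin s) := by
    rcases s with _ | s
    · have h := congrArg natDegree hprod
      simp only [Finset.univ_eq_empty, Finset.prod_empty, natDegree_one,
        natDegree_X_pow_sub_C] at h
      exact absurd h.symm (NeZero.ne m)
    · exact ⟨0⟩
  obtain ⟨e, he_sum, he_dvd⟩ := exists_sum_eq_one_and_prod_dvd_mul hcop
  rw [hprod] at he_dvd
  refine ⟨fun i => outerCode (hshift i) D hD, ?_⟩
  rw [concatCode_eq_image]
  ext c
  constructor
  · intro hc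
    have hcol : ∀ i j,
        (fun k => aeval (cyclicShift F (Fin ℓ → F) m) (e i) c k j) ∈ Set.range (ψ i) :=
      fun i j => by
        rw [hrange, aeval_cyclicShift_apply_apply]
        exact aeval_cyclicShift_mem_minimalCyclicCode (he_dvd i) _
    choose lam hlam using hcol
    have hsym : ∀ i, symbolwise (ψ i) (lam i) = aeval (cyclicShift F (Fin ℓ → F) m) (e i) c :=
      fun i => by ext k j; exact congrFun (hlam i j) k
    refine ⟨lam, fun i => ?_, ?_⟩
    · rw [mem_outerCode, hsym]
      exact Module.End.aeval_apply_mem hD _ hc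
    · simp [concatMap, hsym, ← LinearMap.sum_apply, ← map_sum, he_sum]
  · rintro ⟨lam, hlam, rfl⟩
    rw [SetLike.mem_coe, concatMap_apply]
    exact Submodule.sum_mem D fun i _ => hlam i

end Concatenation

theorem stmt6_general (F : Type*) [Field F] (m ℓ s : ℕ) [NeZero m]
    -- factorization of x^m − 1 into distinct monic irreducible polynomials
    (f : Fin s → Polynomial F)
    (hirr : ∀ i, Irreducible (f i)) (hmonic : ∀ i, (f i).Monic)
    (hdist : ∀ i j, i ≠ j → f i ≠ f j)
    (hprod : ∏ i, f i = X ^ m - C 1)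
    -- ψ_i : E_i → ⟨θ_i⟩ are the F-linear identifications of the fields E_i with the
    -- minimal cyclic codes with check polynomials f_i, intertwining multiplication
    -- by x with the cyclic shift
    (ψ : ∀ i, AdjoinRoot (f i) →ₗ[F] (Fin m → F))
    (hrange : ∀ i, (Set.range (ψ i)) = minimalCyclicCode F m (f i))
    (hshift : ∀ i (δ : AdjoinRoot (f i)) (k : Fin m),
      ψ i (AdjoinRoot.root (f i) * δ) k = ψ i δ (k - 1)) :
    -- (ii) any choice of outer codes C_i yields a QC code (a linear code invariant
    -- under the shift by ℓ, i.e. under the row shift)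
    (∀ Cs : ∀ i, Submodule (AdjoinRoot (f i)) (Fin ℓ → AdjoinRoot (f i)),
      ∃ D : Submodule F (Fin m → Fin ℓ → F),
        (D : Set (Fin m → Fin ℓ → F)) = concatCode ψ Cs ∧
        ∀ c ∈ D, (fun i j => c (i - 1) j) ∈ D) ∧
    -- (i) conversely, every QC code of length mℓ and index ℓ arises this way
    (∀ D : Submodule F (Fin m → Fin ℓ → F),
      (∀ c ∈ D, (fun (i : Fin m) (j : Fin ℓ) => c (i - 1) j) ∈ D) →
      ∃ Cs : ∀ i, Submodule (AdjoinRoot (f i)) (Fin ℓ → AdjoinRoot (f i)),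
        (D : Set (Fin m → Fin ℓ → F)) = concatCode ψ Cs) := by
  have hcop := Polynomial.pairwise_isCoprime_of_irreducible_of_monic hirr hmonic
    fun i j h => not_imp_not.mp (hdist i j) h
  exact ⟨exists_submodule_coe_eq_concatCode hshift,
    exists_coe_eq_concatCode hcop hprod hrange hshift⟩

theorem stmt6 (F : Type*) [Field F] [Fintype F] (m ℓ s : ℕ) (hm : 0 < m) [NeZero m]
    (hℓ : 0 < ℓ) (hmq : (m : F) ≠ 0)
    -- factorization of x^m − 1 into distinct monic irreducible polynomials
    (f : Fin s → Polynomial F)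
    (hirr : ∀ i, Irreducible (f i)) (hmonic : ∀ i, (f i).Monic)
    (hdist : ∀ i j, i ≠ j → f i ≠ f j)
    (hprod : ∏ i, f i = X ^ m - C 1)
    -- ψ_i : E_i → ⟨θ_i⟩ are the F-linear identifications of the fields E_i with the
    -- minimal cyclic codes with check polynomials f_i, intertwining multiplication
    -- by x with the cyclic shift
    (ψ : ∀ i, AdjoinRoot (f i) →ₗ[F] (Fin m → F))
    (hinj : ∀ i, Function.Injective (ψ i))
    (hrange : ∀ i, (Set.range (ψ i)) = minimalCyclicCode F m (f i))
    (hshift : ∀ i (δ : AdjoinRoot (f i)) (k : Fin m),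
      ψ i (AdjoinRoot.root (f i) * δ) k = ψ i δ (k - 1)) :
    -- (ii) any choice of outer codes C_i yields a QC code (a linear code invariant
    -- under the shift by ℓ, i.e. under the row shift)
    (∀ Cs : ∀ i, Submodule (AdjoinRoot (f i)) (Fin ℓ → AdjoinRoot (f i)),
      ∃ D : Submodule F (Fin m → Fin ℓ → F),
        (D : Set (Fin m → Fin ℓ → F)) = concatCode ψ Cs ∧
        ∀ c ∈ D, (fun i j => c (i - 1) j) ∈ D) ∧
    -- (i) conversely, every QC code of length mℓ and index ℓ arises this way
    (∀ D : Submodule F (Fin m → Fin ℓ → F),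
      (∀ c ∈ D, (fun (i : Fin m) (j : Fin ℓ) => c (i - 1) j) ∈ D) →
      ∃ Cs : ∀ i, Submodule (AdjoinRoot (f i)) (Fin ℓ → AdjoinRoot (f i)),
        (D : Set (Fin m → Fin ℓ → F)) = concatCode ψ Cs) :=
  stmt6_general F m ℓ s f hirr hmonic hdist hprod ψ hrange hshift
end

section
/- (Lally bound) Let C be an r-generator QC code of length mℓ and index ℓ over F_q with generating set {f_1,…,f_r} ⊆ F_q[x]^ℓ. Let Ĉ be the cyclic code of length m over F_{q^ℓ} generated by gcd(Φ(f_1),…,Φ(f_r), x^m−1), where Φ maps (c_0(x),…,c_{ℓ−1}(x)) to Σ_j c_j(x)α^j for a fixed F_q-basis {1,α,…,α^{ℓ−1}} of F_{q^ℓ}, and let B ⊆ F_q^ℓ be the linear code generated by all coefficient-row vectors of the generators. Then d(C) ≥ d(Ĉ)·d(B). -/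
set_option maxHeartbeats 1000000

open Polynomial

/-- Hamming weight of a vector. -/
noncomputable def wtv {n : ℕ} {α : Type*} [Zero α] (v : Fin n → α) : ℕ :=
  (@Finset.filter _ (fun i => v i ≠ 0) (Classical.decPred _) Finset.univ).card

/-- Minimum Hamming distance of a code given as a set of vectors. -/
noncomputable def minDistSet {n : ℕ} {α : Type*} [Zero α] (S : Set (Fin n → α)) : ℕ :=
  sInf {w | ∃ v ∈ S, v ≠ 0 ∧ w = wtv v}

/-- The polynomial of a length-`m` vector. -/
noncomputable def toPoly {F : Type*} [Field F] {m : ℕ} (v : Fin m → F) : Polynomial F :=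
  ∑ k : Fin m, C (v k) * X ^ (k : ℕ)

/-! The Φ-image `v` of a nonzero codeword `c`, `v i = ∑ j, c i j • α ^ j`, is a nonzero codeword
of Ĉ whose support is the set of nonzero rows of `c`, because the powers of `α` form a basis.
Every row of `c` lies in `B`: a functional vanishing on `B`, applied to `c` row by row, gives a
polynomial of degree `< m` that is divisible by `x ^ m - 1`, hence zero. Therefore
`d(Ĉ) * d(B) ≤ wt(v) * d(B) ≤ ∑ i, wt(c i)`. -/

section Weight

variable {n : ℕ} {α β : Type*} [Zero α] [Zero β]

theorem wtv_congr {v : Fin n → α} {w : Fin n → β} (h : ∀ i, v i = 0 ↔ w i = 0) :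
    wtv v = wtv w := by
  unfold wtv
  congr 1
  ext i
  simp [h i]

theorem minDistSet_le_wtv {S : Set (Fin n → α)} {v : Fin n → α} (hv : v ∈ S) (hv0 : v ≠ 0) :
    minDistSet S ≤ wtv v :=
  Nat.sInf_le ⟨v, hv, hv0, rfl⟩

theorem wtv_mul_le_sum_wtv {ℓ : ℕ} {c : Fin n → Fin ℓ → α} {d : ℕ}
    (hd : ∀ i, c i ≠ 0 → d ≤ wtv (c i)) : wtv c * d ≤ ∑ i, wtv (c i) := by
  classical
  unfold wtv
  rw [← smul_eq_mul]
  refine (Finset.card_nsmul_le_sum _ _ _ fun i hi => hd i ?_).trans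
    (Finset.sum_le_sum_of_subset (Finset.subset_univ _))
  simpa using hi

end Weight

section ToPoly

variable {F : Type*} [Field F] {m : ℕ}

theorem coeff_toPoly (v : Fin m → F) (n : ℕ) :
    (toPoly v).coeff n = if h : n < m then v ⟨n, h⟩ else 0 := by
  classical
  simp only [toPoly, finsetSum_coeff, coeff_C_mul, coeff_X_pow, mul_ite, mul_one, mul_zero]
  split_ifs with h
  · rw [Finset.sum_eq_single ⟨n, h⟩ (fun k _ hk => if_neg fun e => hk (Fin.ext e.symm))
      (by simp)]
    simp
  · exact Finset.sum_eq_zero fun k _ => if_neg fun e => h (by have := k.isLt; omega)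

theorem degree_toPoly_lt (v : Fin m → F) : (toPoly v).degree < m := by
  refine (degree_sum_le _ _).trans_lt ((Finset.sup_lt_iff (WithBot.bot_lt_coe m)).2 ?_)
  exact fun k _ => (degree_C_mul_X_pow_le _ _).trans_lt (WithBot.coe_lt_coe.2 k.isLt)

end ToPoly

theorem Polynomial.eq_zero_of_X_pow_sub_one_dvd {R : Type*} [CommRing R] [IsDomain R] {m : ℕ}
    {p : R[X]} (hdeg : p.degree < m) (hdvd : X ^ m - C 1 ∣ p) : p = 0 := by
  rcases m.eq_zero_or_pos with rfl | hm
  · simpa using hdvd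
  · exact eq_zero_of_dvd_of_degree_lt hdvd (by rwa [degree_X_pow_sub_C hm])

theorem exists_eq_sum_smul_add_smul_of_mem_span {R : Type*} [CommRing R] {ι κ : Type*}
    [Fintype ι] {g : R[X]} {f : ι → κ → R[X]} {a : κ → R[X]}
    (h : (fun j => AdjoinRoot.mk g (a j)) ∈
      Submodule.span (AdjoinRoot g) (Set.range fun k j => AdjoinRoot.mk g (f k j))) :
    ∃ (p : ι → R[X]) (q : κ → R[X]), a = ∑ k, p k • f k + g • q := by
  obtain ⟨t, ht⟩ := Submodule.mem_span_range_iff_exists_fun _ |>.1 h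
  choose p hp using fun k => AdjoinRoot.mk_surjective (t k)
  have hdvd : ∀ j, g ∣ a j - ∑ k, p k * f k j := fun j => by
    rw [← AdjoinRoot.mk_eq_zero, map_sub, map_sum, ← congrFun ht j]
    simp [hp]
  choose q hq using hdvd
  exact ⟨p, q, funext fun j => by simp [← hq j]⟩

section Phi

variable {R S : Type*} [CommRing R] [CommRing S] [Algebra R S] {ℓ : ℕ}

noncomputable def phi (α : S) (g : Fin ℓ → R[X]) : S[X] :=
  ∑ j, (g j).map (algebraMap R S) * C (α ^ (j : ℕ))

theorem phi_add (α : S) (g h : Fin ℓ → R[X]) : phi α (g + h) = phi α g + phi α h := by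
  simp [phi, add_mul, Finset.sum_add_distrib]

theorem phi_smul (α : S) (p : R[X]) (g : Fin ℓ → R[X]) :
    phi α (p • g) = p.map (algebraMap R S) * phi α g := by
  simp [phi, Finset.mul_sum, mul_assoc]

theorem phi_sum {ι : Type*} (s : Finset ι) (α : S) (g : ι → Fin ℓ → R[X]) :
    phi α (∑ k ∈ s, g k) = ∑ k ∈ s, phi α (g k) := by
  classical
  induction s using Finset.induction_on with
  | empty => simp [phi]
  | insert k s hk ih => rw [Finset.sum_insert hk, Finset.sum_insert hk, phi_add, ih]

theorem coeff_phi (α : S) (g : Fin ℓ → R[X]) (n : ℕ) :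
    (phi α g).coeff n = ∑ j, (g j).coeff n • α ^ (j : ℕ) := by
  simp only [phi, finsetSum_coeff, coeff_mul_C, coeff_map, Algebra.smul_def]

theorem phi_sum_smul_add_smul_mem_span {ι : Type*} [Fintype ι] (α : S) (d : R[X]) (f : ι → Fin ℓ → R[X])
    (p : ι → R[X]) (q : Fin ℓ → R[X]) :
    phi α (∑ k, p k • f k + d • q) ∈
      Ideal.span ({d.map (algebraMap R S)} ∪ Set.range fun k => phi α (f k)) := by
  rw [phi_add, phi_sum, phi_smul]
  refine add_mem (Ideal.sum_mem _ fun k _ => ?_) ?_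
  · rw [phi_smul]
    exact Ideal.mul_mem_left _ _ (Ideal.subset_span (Or.inr ⟨k, rfl⟩))
  · exact Ideal.mul_mem_right _ _ (Ideal.subset_span (Or.inl rfl))

end Phi

theorem toPoly_sum_smul_pow_eq_phi {F E : Type*} [Field F] [Field E] [Algebra F E] {m ℓ : ℕ}
    (α : E) (c : Fin m → Fin ℓ → F) :
    toPoly (fun i => ∑ j, c i j • α ^ (j : ℕ)) = phi α (fun j => toPoly fun i => c i j) := by
  ext n
  simp only [coeff_phi, coeff_toPoly]
  split_ifs <;> simp

theorem mem_span_coeff_rows {F : Type*} [Field F] {m ℓ r : ℕ} {c : Fin m → Fin ℓ → F}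
    {f : Fin r → Fin ℓ → F[X]} {p : Fin r → F[X]} {q : Fin ℓ → F[X]}
    (h : (fun j => toPoly fun i => c i j) = ∑ k, p k • f k + (X ^ m - C 1 : F[X]) • q) (i : Fin m) :
    c i ∈ Submodule.span F {u : Fin ℓ → F | ∃ (k : Fin r) (n : ℕ), u = fun j => (f k j).coeff n} := by
  rw [← Subspace.forall_mem_dualAnnihilator_apply_eq_zero_iff]
  intro φ hφ
  rw [Submodule.mem_dualAnnihilator] at hφ
  let w := Fintype.linearCombination F[X] fun j => C (φ fun j' => if j = j' then 1 else 0)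
  have coeff_w : ∀ g n, (w g).coeff n = φ fun j => (g j).coeff n := fun g n => by
    simp [w, Fintype.linearCombination_apply, finsetSum_coeff, coeff_mul_C,
      φ.pi_apply_eq_sum_univ (fun j => (g j).coeff n)]
  have hwf : ∀ k, w (f k) = 0 := fun k => ext fun n => by
    rw [coeff_w, coeff_zero]
    exact hφ _ (Submodule.subset_span ⟨k, n, rfl⟩)
  have hw : w (fun j => toPoly fun i => c i j) = toPoly fun i => φ (c i) := ext fun n => by
    simp only [coeff_w, coeff_toPoly]
    split_ifs
    exacts [rfl, map_zero φ]
  have hφc : toPoly (fun i => φ (c i)) = 0 := by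
    refine eq_zero_of_X_pow_sub_one_dvd (degree_toPoly_lt _) ⟨w q, ?_⟩
    rw [← hw, h]
    simp [hwf]
  simpa [coeff_toPoly] using congrArg (fun P => P.coeff (i : ℕ)) hφc

theorem stmt8_general (F : Type*) [Field F] (m ℓ r : ℕ)
    -- E = F_{q^ℓ}, with basis {1, α, …, α^{ℓ−1}} over F
    (E : Type*) [Field E] [Algebra F E] (α : E)
    (b : Module.Basis (Fin ℓ) F E) (hb : ∀ j : Fin ℓ, b j = α ^ (j : ℕ))
    -- the generating set {f_1, …, f_r} ⊆ F[x]^ℓ of the QC code C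
    (f : Fin r → Fin ℓ → Polynomial F) :
    -- Lally bound: d(C) ≥ d(Ĉ)·d(B), where
    ∀ c : Fin m → Fin ℓ → F,
      -- c is a codeword of C (the R-span of the generators)
      (fun j : Fin ℓ => AdjoinRoot.mk (X ^ m - C 1 : Polynomial F) (toPoly fun i => c i j)) ∈
        Submodule.span (AdjoinRoot (X ^ m - C 1 : Polynomial F))
          (Set.range fun k : Fin r =>
            fun j : Fin ℓ => AdjoinRoot.mk (X ^ m - C 1 : Polynomial F) (f k j)) →
      c ≠ 0 →
      -- Ĉ is the cyclic code over E generated by gcd(Φ(f_1), …, Φ(f_r), x^m − 1),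
      -- i.e. the code whose polynomials lie in the ideal generated by the Φ(f_k)
      -- and x^m − 1, where Φ(v) = Σ_j v_j(x) α^j
      minDistSet {v : Fin m → E |
          toPoly v ∈ Ideal.span ({X ^ m - C 1} ∪
            Set.range fun k : Fin r =>
              ∑ j : Fin ℓ, ((f k j).map (algebraMap F E)) * C (α ^ (j : ℕ)))}
      -- times d(B), where B ⊆ F^ℓ is spanned by the coefficient rows of the generators
      * minDistSet
          ((Submodule.span F {u : Fin ℓ → F | ∃ (k : Fin r) (i : ℕ),
              u = fun j => (f k j).coeff i} : Submodule F (Fin ℓ → F)) : Set (Fin ℓ → F))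
      ≤ ∑ i : Fin m, wtv (c i) := by
  intro c hc hc0
  obtain ⟨p, q, hpq⟩ := exists_eq_sum_smul_add_smul_of_mem_span hc
  have hli : LinearIndependent F fun j : Fin ℓ => α ^ (j : ℕ) := funext hb ▸ b.linearIndependent
  set v : Fin m → E := fun i => ∑ j, c i j • α ^ (j : ℕ)
  have hvc : ∀ i, v i = 0 ↔ c i = 0 := fun i =>
    ⟨fun h => funext (Fintype.linearIndependent_iff.1 hli (c i) h), fun h => by simp [v, h]⟩
  have hv : toPoly v ∈ Ideal.span ({X ^ m - C 1} ∪ Set.range fun k => phi α (f k)) := by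
    have := phi_sum_smul_add_smul_mem_span α (X ^ m - C 1) f p q
    rw [Polynomial.map_sub, Polynomial.map_pow, map_X, Polynomial.map_C, map_one] at this
    rwa [toPoly_sum_smul_pow_eq_phi, hpq]
  have hv0 : v ≠ 0 := fun h => hc0 (funext fun i => (hvc i).1 (congrFun h i))
  calc _ ≤ wtv v * _ := Nat.mul_le_mul_right _ (minDistSet_le_wtv hv hv0)
    _ = wtv c * _ := by rw [wtv_congr hvc]
    _ ≤ _ := wtv_mul_le_sum_wtv fun i hi => minDistSet_le_wtv (mem_span_coeff_rows hpq i) hi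

theorem stmt8 (F : Type*) [Field F] [Fintype F] (m ℓ r : ℕ) (hm : 0 < m)
    (hmq : (m : F) ≠ 0) (hℓ : 0 < ℓ)
    -- E = F_{q^ℓ}, with basis {1, α, …, α^{ℓ−1}} over F
    (E : Type*) [Field E] [Algebra F E] (α : E)
    (b : Module.Basis (Fin ℓ) F E) (hb : ∀ j : Fin ℓ, b j = α ^ (j : ℕ))
    -- the generating set {f_1, …, f_r} ⊆ F[x]^ℓ of the QC code C
    (f : Fin r → Fin ℓ → Polynomial F) :
    -- Lally bound: d(C) ≥ d(Ĉ)·d(B), where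
    ∀ c : Fin m → Fin ℓ → F,
      -- c is a codeword of C (the R-span of the generators)
      (fun j : Fin ℓ => AdjoinRoot.mk (X ^ m - C 1 : Polynomial F) (toPoly fun i => c i j)) ∈
        Submodule.span (AdjoinRoot (X ^ m - C 1 : Polynomial F))
          (Set.range fun k : Fin r =>
            fun j : Fin ℓ => AdjoinRoot.mk (X ^ m - C 1 : Polynomial F) (f k j)) →
      c ≠ 0 →
      -- Ĉ is the cyclic code over E generated by gcd(Φ(f_1), …, Φ(f_r), x^m − 1),
      -- i.e. the code whose polynomials lie in the ideal generated by the Φ(f_k)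
      -- and x^m − 1, where Φ(v) = Σ_j v_j(x) α^j
      minDistSet {v : Fin m → E |
          toPoly v ∈ Ideal.span ({X ^ m - C 1} ∪
            Set.range fun k : Fin r =>
              ∑ j : Fin ℓ, ((f k j).map (algebraMap F E)) * C (α ^ (j : ℕ)))}
      -- times d(B), where B ⊆ F^ℓ is spanned by the coefficient rows of the generators
      * minDistSet
          ((Submodule.span F {u : Fin ℓ → F | ∃ (k : Fin r) (i : ℕ),
              u = fun j => (f k j).coeff i} : Submodule F (Fin ℓ → F)) : Set (Fin ℓ → F))
      ≤ ∑ i : Fin m, wtv (c i) :=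
  stmt8_general F m ℓ r E α b hb f
end

section
/- Every nonzero codeword of a QC code C, viewed as an m×ℓ array, has each of its nonzero rows in the linear code B ⊆ F_q^ℓ spanned by the coefficient vectors of the generators of C; hence every nonzero row of a codeword has weight at least d(B). -/
set_option maxHeartbeats 1000000

open Polynomial

-- Aux: coefficient vectors of `p %ₘ (X^m - 1)` stay in a submodule containing
-- all coefficient vectors of `p`.
lemma coeffvec_mod_mem {F : Type*} [Field F] {ℓ : ℕ} (M : Submodule F (Fin ℓ → F))
    {m : ℕ} (hm : 0 < m) :
    ∀ N (p : Fin ℓ → Polynomial F), (∀ j i, N ≤ i → (p j).coeff i = 0) →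
    (∀ i, (fun j => (p j).coeff i) ∈ M) →
    ∀ i, (fun j => ((p j) %ₘ (X ^ m - C 1)).coeff i) ∈ M := by
  have hq : (X ^ m - C 1 : Polynomial F).Monic := monic_X_pow_sub_C 1 hm.ne'
  have hdq : (X ^ m - C 1 : Polynomial F).degree = m := degree_X_pow_sub_C hm 1
  intro N
  induction N with
  | zero =>
    intro p hb hmem i
    have hp : ∀ j, p j = 0 := fun j => Polynomial.ext fun i => hb j i (Nat.zero_le _)
    have : (fun j => ((p j) %ₘ (X ^ m - C 1)).coeff i) = 0 := by
      funext j; simp [hp j]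
    rw [this]; exact M.zero_mem
  | succ N ih =>
    intro p hb hmem i
    by_cases hNm : N < m
    · have hd : ∀ j, (p j) %ₘ (X ^ m - C 1) = p j := by
        intro j
        refine (modByMonic_eq_self_iff hq).mpr ?_
        rw [hdq, degree_lt_iff_coeff_zero]
        intro i' hi'
        have : m ≤ i' := by exact_mod_cast hi'
        exact hb j i' (by omega)
      simp only [hd]; exact hmem i
    · push_neg at hNm
      set p' : Fin ℓ → Polynomial F := fun j =>
        p j - C ((p j).coeff N) * X ^ N + C ((p j).coeff N) * X ^ (N - m) with hp'
      have key : ∀ j, (p j) %ₘ (X ^ m - C 1) = (p' j) %ₘ (X ^ m - C 1) := by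
        intro j
        apply modByMonic_eq_of_dvd_sub hq
        refine ⟨C ((p j).coeff N) * X ^ (N - m), ?_⟩
        have hX : (X : Polynomial F) ^ m * X ^ (N - m) = X ^ N := by
          rw [← pow_add, Nat.add_sub_cancel' hNm]
        simp only [hp', map_one]
        linear_combination (C ((p j).coeff N)) * hX.symm
      have hb' : ∀ j i', N ≤ i' → (p' j).coeff i' = 0 := by
        intro j i' hi'
        have h3 : i' ≠ N - m := by omega
        simp only [hp', coeff_add, coeff_sub, coeff_C_mul, coeff_X_pow, if_neg h3,
          mul_zero, add_zero]
        by_cases hNi : i' = N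
        · rw [if_pos hNi, hNi, mul_one, sub_self]
        · rw [if_neg hNi, mul_zero, sub_zero]
          exact hb j i' (by omega)
      have hmem' : ∀ i', (fun j => (p' j).coeff i') ∈ M := by
        intro i'
        have heq : (fun j => (p' j).coeff i') = (fun j => (p j).coeff i')
            + ((if i' = N - m then (1:F) else 0) - (if i' = N then (1:F) else 0))
              • (fun j => (p j).coeff N) := by
          funext j
          simp only [hp', coeff_add, coeff_sub, coeff_C_mul, coeff_X_pow,
            Pi.add_apply, Pi.smul_apply, smul_eq_mul]
          split_ifs <;> first | ring | omega
        rw [heq]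
        exact M.add_mem (hmem i') (M.smul_mem _ (hmem N))
      have hih := ih p' hb' hmem' i
      have heq2 : (fun j => ((p j) %ₘ (X ^ m - C 1)).coeff i)
          = fun j => ((p' j) %ₘ (X ^ m - C 1)).coeff i := funext fun j => by rw [key j]
      rw [heq2]; exact hih

lemma coeffvec_mod_mem' {F : Type*} [Field F] {ℓ : ℕ} (M : Submodule F (Fin ℓ → F))
    {m : ℕ} (hm : 0 < m) (p : Fin ℓ → Polynomial F)
    (hmem : ∀ i, (fun j => (p j).coeff i) ∈ M) :
    ∀ i, (fun j => ((p j) %ₘ (X ^ m - C 1)).coeff i) ∈ M := by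
  apply coeffvec_mod_mem M hm ((Finset.univ.sup fun j => (p j).natDegree) + 1) p _ hmem
  intro j i hi
  apply coeff_eq_zero_of_natDegree_lt
  have : (p j).natDegree ≤ Finset.univ.sup fun j => (p j).natDegree :=
    Finset.le_sup (f := fun j => (p j).natDegree) (Finset.mem_univ j)
  omega

lemma toPoly_coeff {F : Type*} [Field F] {m : ℕ} (v : Fin m → F) (i : Fin m) :
    (toPoly v).coeff i = v i := by
  unfold toPoly
  rw [finset_sum_coeff]
  simp only [coeff_C_mul, coeff_X_pow]
  rw [Finset.sum_eq_single i]
  · simp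
  · intro k _ hk
    rw [if_neg (by simpa [Fin.val_inj, eq_comm] using hk), mul_zero]
  · simp

lemma toPoly_degree_lt {F : Type*} [Field F] {m : ℕ} (hm : 0 < m) (v : Fin m → F) :
    (toPoly v).degree < (m : ℕ) := by
  unfold toPoly
  refine lt_of_le_of_lt (degree_sum_le _ _) ?_
  refine (Finset.sup_lt_iff ?_).mpr ?_
  · exact_mod_cast WithBot.bot_lt_coe m
  · intro k _
    refine lt_of_le_of_lt (degree_C_mul_X_pow_le _ _) ?_
    exact_mod_cast k.isLt

theorem stmt9 (F : Type*) [Field F] (m ℓ r : ℕ) (hm : 0 < m)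
    -- the generating set {f_1, …, f_r} ⊆ F[x]^ℓ of the QC code C
    (f : Fin r → Fin ℓ → Polynomial F) :
    ∀ c : Fin m → Fin ℓ → F,
      -- c is a codeword of C, viewed as an m × ℓ array
      (fun j : Fin ℓ => AdjoinRoot.mk (X ^ m - C 1 : Polynomial F) (toPoly fun i => c i j)) ∈
        Submodule.span (AdjoinRoot (X ^ m - C 1 : Polynomial F))
          (Set.range fun k : Fin r =>
            fun j : Fin ℓ => AdjoinRoot.mk (X ^ m - C 1 : Polynomial F) (f k j)) →
      ∀ i : Fin m,
        -- every row of c lies in the code B spanned by the coefficient vectors of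
        -- the generators …
        c i ∈ Submodule.span F {u : Fin ℓ → F | ∃ (k : Fin r) (i' : ℕ),
            u = fun j => (f k j).coeff i'} ∧
        -- … hence every nonzero row has weight at least d(B)
        (c i ≠ 0 →
          minDistSet ((Submodule.span F {u : Fin ℓ → F | ∃ (k : Fin r) (i' : ℕ),
              u = fun j => (f k j).coeff i'} : Submodule F (Fin ℓ → F)) : Set (Fin ℓ → F))
            ≤ wtv (c i)) := by
  intro c hc i
  have hq : (X ^ m - C 1 : Polynomial F).Monic := monic_X_pow_sub_C 1 hm.ne'
  set M : Submodule F (Fin ℓ → F) :=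
    Submodule.span F {u : Fin ℓ → F | ∃ (k : Fin r) (i' : ℕ),
      u = fun j => (f k j).coeff i'} with hM
  have main : ∀ v : Fin ℓ → AdjoinRoot (X ^ m - C 1 : Polynomial F),
      v ∈ Submodule.span (AdjoinRoot (X ^ m - C 1 : Polynomial F))
        (Set.range fun k : Fin r =>
          fun j : Fin ℓ => AdjoinRoot.mk (X ^ m - C 1 : Polynomial F) (f k j)) →
      ∀ i' : ℕ, (fun j => (AdjoinRoot.modByMonicHom hq (v j)).coeff i') ∈ M := by
    intro v hv
    induction hv using Submodule.span_induction with
    | mem x hx =>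
      obtain ⟨k, rfl⟩ := hx
      intro i'
      have hg : ∀ i'', (fun j => (f k j).coeff i'') ∈ M :=
        fun i'' => Submodule.subset_span ⟨k, i'', rfl⟩
      have := coeffvec_mod_mem' M hm (fun j => f k j) hg i'
      simpa [AdjoinRoot.modByMonicHom_mk] using this
    | zero =>
      intro i'
      have : (fun j => (AdjoinRoot.modByMonicHom hq
          ((0 : Fin ℓ → AdjoinRoot (X ^ m - C 1 : Polynomial F)) j)).coeff i')
          = (0 : Fin ℓ → F) := by
        funext j; simp
      rw [this]; exact M.zero_mem
    | add x y hx hy ihx ihy =>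
      intro i'
      have hsum := M.add_mem (ihx i') (ihy i')
      have heq : (fun j => (AdjoinRoot.modByMonicHom hq ((x + y) j)).coeff i')
          = (fun j => (AdjoinRoot.modByMonicHom hq (x j)).coeff i')
            + fun j => (AdjoinRoot.modByMonicHom hq (y j)).coeff i' := by
        funext j; simp [map_add]
      rw [heq]; exact hsum
    | smul a x hx ihx =>
      intro i'
      obtain ⟨g, rfl⟩ := AdjoinRoot.mk_surjective a
      set p : Fin ℓ → Polynomial F := fun j => AdjoinRoot.modByMonicHom hq (x j) with hp
      have hxp : ∀ j, AdjoinRoot.mk (X ^ m - C 1 : Polynomial F) (p j) = x j :=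
        fun j => AdjoinRoot.mk_leftInverse hq (x j)
      have hmul : ∀ i'', (fun j => (g * p j).coeff i'') ∈ M := by
        intro i''
        have heq : (fun j => (g * p j).coeff i'')
            = ∑ t ∈ Finset.range (i'' + 1),
                g.coeff t • fun j => (p j).coeff (i'' - t) := by
          funext j
          rw [coeff_mul, Finset.Nat.sum_antidiagonal_eq_sum_range_succ_mk]
          simp [Finset.sum_apply]
        rw [heq]
        exact M.sum_mem fun t _ => M.smul_mem _ (ihx (i'' - t))
      have hmod := coeffvec_mod_mem' M hm (fun j => g * p j) hmul i'
      have heq2 : (fun j => (AdjoinRoot.modByMonicHom hq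
            ((AdjoinRoot.mk (X ^ m - C 1 : Polynomial F) g • x) j)).coeff i')
          = fun j => ((g * p j) %ₘ (X ^ m - C 1)).coeff i' := by
        funext j
        rw [Pi.smul_apply, smul_eq_mul, ← hxp j, ← map_mul, AdjoinRoot.modByMonicHom_mk]
      rw [heq2]; exact hmod
  have h1 : c i ∈ M := by
    have hmem := main _ hc (i : ℕ)
    have heq : (fun j => (AdjoinRoot.modByMonicHom hq
          (AdjoinRoot.mk (X ^ m - C 1 : Polynomial F) (toPoly fun i0 => c i0 j))).coeff (i : ℕ))
        = c i := by
      funext j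
      rw [AdjoinRoot.modByMonicHom_mk,
        (modByMonic_eq_self_iff hq).mpr (by
          rw [degree_X_pow_sub_C hm 1]; exact toPoly_degree_lt hm _),
        toPoly_coeff]
    rwa [heq] at hmem
  exact ⟨h1, fun hne => Nat.sInf_le ⟨c i, h1, hne, rfl⟩⟩
end

section
/- Let m = 3 and q ≡ 2 (mod 3) with q = 2^t, t odd. Let C_1 ⊆ F_q^ℓ and C_2 ⊆ F_{q^2}^ℓ be linear codes and β ∈ F_{q^2} with β² + β + 1 = 0. Then the set C = {(z+b, z+a, z+a+b) of stacked rows : z ∈ C_1, a + βb ∈ C_2 with a,b ∈ F_q^ℓ} is a quasi-cyclic code of length 3ℓ over F_q invariant under shift by ℓ positions, and every QC code of length 3ℓ and index ℓ over F_q arises this way. -/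
set_option maxHeartbeats 1000000

/-- The cubic-construction code: 3×ℓ arrays (z+b, z+a, z+a+b) with z ∈ C₁ and
a + βb ∈ C₂. -/
def cubicCode {F E : Type*} [Field F] [Field E] [Algebra F E] (β : E) {ℓ : ℕ}
    (C₁ : Submodule F (Fin ℓ → F)) (C₂ : Submodule E (Fin ℓ → E)) :
    Set (Fin 3 → Fin ℓ → F) :=
  {c | ∃ z a b : Fin ℓ → F, z ∈ C₁ ∧
    (fun j => algebraMap F E (a j) + algebraMap F E (b j) * β) ∈ C₂ ∧
    c 0 = z + b ∧ c 1 = z + a ∧ c 2 = z + a + b}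

theorem stmt17 (F : Type*) [Field F] [Fintype F] (t : ℕ) (ht : Odd t)
    -- q = 2^t with t odd (so q ≡ 2 (mod 3))
    (hq : Fintype.card F = 2 ^ t) (hchar : ringChar F = 2)
    (hq3 : Fintype.card F % 3 = 2)
    (ℓ : ℕ) (hℓ : 0 < ℓ)
    -- E = F_{q²} = F(β), β² + β + 1 = 0
    (E : Type*) [Field E] [Algebra F E] (β : E) (hβ : β ^ 2 + β + 1 = 0)
    (hE : ∀ x : E, ∃ a b : F, x = algebraMap F E a + algebraMap F E b * β) :
    -- (i) for any linear codes C₁ ⊆ F^ℓ, C₂ ⊆ E^ℓ, the cubic-construction code is a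
    -- linear code of length 3ℓ invariant under the shift by ℓ (cyclic row shift)
    (∀ (C₁ : Submodule F (Fin ℓ → F)) (C₂ : Submodule E (Fin ℓ → E)),
      ∃ D : Submodule F (Fin 3 → Fin ℓ → F),
        (D : Set (Fin 3 → Fin ℓ → F)) = cubicCode β C₁ C₂ ∧
        ∀ c ∈ D, (fun (i : Fin 3) (j : Fin ℓ) => c (i - 1) j) ∈ D) ∧
    -- (ii) conversely, every QC code of length 3ℓ and index ℓ over F arises this way
    (∀ D : Submodule F (Fin 3 → Fin ℓ → F),
      (∀ c ∈ D, (fun (i : Fin 3) (j : Fin ℓ) => c (i - 1) j) ∈ D) →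
      ∃ (C₁ : Submodule F (Fin ℓ → F)) (C₂ : Submodule E (Fin ℓ → E)),
        (D : Set (Fin 3 → Fin ℓ → F)) = cubicCode β C₁ C₂) := by
  classical
  -- basic characteristic-2 facts
  have h2F : (2 : F) = 0 := by
    haveI : CharP F 2 := hchar ▸ ringChar.charP F
    exact CharP.cast_eq_zero F 2
  have hFadd : ∀ x : F, x + x = 0 := fun x => by
    have : x + x = 2 * x := by ring
    rw [this, h2F, zero_mul]
  have h2E : (2 : E) = 0 := by
    calc (2 : E) = algebraMap F E 2 := by rw [map_ofNat]
    _ = 0 := by rw [h2F, map_zero]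
  have hβ2 : β ^ 2 = β + 1 := by linear_combination hβ - (β + 1) * h2E
  have hiF : Function.Injective (algebraMap F E) := (algebraMap F E).injective
  -- x² + x + 1 has no root in F
  have hroot : ∀ c : F, c ^ 2 + c + 1 ≠ 0 := by
    intro c hc
    have hc0 : c ≠ 0 := by
      intro h; rw [h] at hc; norm_num at hc
    have hc1 : c ≠ 1 := by
      intro h; rw [h] at hc
      have : (1 : F) = 0 := by linear_combination hc - h2F
      exact one_ne_zero this
    have hc3 : c ^ 3 = 1 := by linear_combination (c - 1) * hc
    set u : Fˣ := Units.mk0 c hc0 with hu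
    have hu3 : u ^ 3 = 1 := by
      ext
      simpa [hu] using hc3
    have hdvd : orderOf u ∣ 3 := orderOf_dvd_of_pow_eq_one hu3
    have hne1 : orderOf u ≠ 1 := by
      intro h
      exact hc1 (by simpa [hu, Units.ext_iff] using orderOf_eq_one_iff.mp h)
    have h3 : orderOf u = 3 := by
      rcases (Nat.prime_three).eq_one_or_self_of_dvd _ hdvd with h | h
      · exact absurd h hne1
      · exact h
    have hcard : orderOf u ∣ Fintype.card Fˣ := orderOf_dvd_card
    rw [h3, Fintype.card_units] at hcard
    have h1 : 1 ≤ Fintype.card F := Fintype.card_pos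
    omega
  -- β is not in the image of F
  have hnotF : ∀ c : F, algebraMap F E c ≠ β := by
    intro c hc
    apply hroot c
    apply hiF
    rw [map_add, map_add, map_one, map_pow, hc, map_zero]
    exact hβ
  -- linear independence of 1, β over F
  have hinj : ∀ u v : F, algebraMap F E u + algebraMap F E v * β = 0 → u = 0 ∧ v = 0 := by
    intro u v h
    by_cases hv : v = 0
    · subst hv
      refine ⟨hiF ?_, rfl⟩
      rw [map_zero]
      simpa using h
    · exfalso
      apply hnotF (u / v)
      have hV : algebraMap F E v ≠ 0 := fun h0 => hv (hiF (by rw [h0, map_zero]))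
      rw [map_div₀, div_eq_iff hV]
      linear_combination h - algebraMap F E v * β * h2E
  constructor
  · -- part (i)
    intro C₁ C₂
    refine ⟨{ carrier := cubicCode β C₁ C₂
            , add_mem' := ?_
            , zero_mem' := ?_
            , smul_mem' := ?_ }, rfl, ?_⟩
    · rintro x y ⟨z, a, b, hz, hab, h0, h1, h2⟩ ⟨z', a', b', hz', hab', h0', h1', h2'⟩
      refine ⟨z + z', a + a', b + b', C₁.add_mem hz hz', ?_, ?_, ?_, ?_⟩
      · have := C₂.add_mem hab hab'
        convert this using 1
        funext j
        simp [map_add]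
        ring
      · funext j
        simp only [Pi.add_apply, h0, h0']
        ring
      · funext j
        simp only [Pi.add_apply, h1, h1']
        ring
      · funext j
        simp only [Pi.add_apply, h2, h2']
        ring
    · refine ⟨0, 0, 0, C₁.zero_mem, ?_, by simp, by simp, by simp⟩
      have : (fun j : Fin ℓ => algebraMap F E ((0 : Fin ℓ → F) j)
          + algebraMap F E ((0 : Fin ℓ → F) j) * β) = 0 := by
        funext j; simp
      rw [this]; exact C₂.zero_mem
    · rintro s x ⟨z, a, b, hz, hab, h0, h1, h2⟩
      refine ⟨s • z, s • a, s • b, C₁.smul_mem s hz, ?_, ?_, ?_, ?_⟩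
      · have := C₂.smul_mem (algebraMap F E s) hab
        convert this using 1
        funext j
        simp [map_mul, Algebra.smul_def]
        ring
      · funext j
        simp only [Pi.smul_apply, Pi.add_apply, h0, smul_eq_mul]
        ring
      · funext j
        simp only [Pi.smul_apply, Pi.add_apply, h1, smul_eq_mul]
        ring
      · funext j
        simp only [Pi.smul_apply, Pi.add_apply, h2, smul_eq_mul]
        ring
    · rintro c ⟨z, a, b, hz, hab, h0, h1, h2⟩
      refine ⟨z, b, a + b, hz, ?_, ?_, ?_, ?_⟩
      · have := C₂.smul_mem β hab
        convert this using 1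
        funext j
        simp only [Pi.smul_apply, smul_eq_mul, Pi.add_apply, map_add]
        linear_combination (-(algebraMap F E (b j))) * hβ2
      · funext j
        have e0 : (0 - 1 : Fin 3) = 2 := rfl
        simp only [e0, h2, Pi.add_apply]
        ring
      · funext j
        have e1 : (1 - 1 : Fin 3) = 0 := rfl
        simp only [e1, h0, Pi.add_apply]
      · funext j
        have e2 : (2 - 1 : Fin 3) = 1 := rfl
        simp only [e2, h1, Pi.add_apply]
        linear_combination -hFadd (b j)
  · -- part (ii)
    intro D hD
    refine ⟨{ carrier := {z | (fun _ : Fin 3 => z) ∈ D}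
            , add_mem' := ?_
            , zero_mem' := ?_
            , smul_mem' := ?_ },
            { carrier := {x | ∃ a b : Fin ℓ → F,
                (![b, a, a + b] : Fin 3 → Fin ℓ → F) ∈ D ∧
                x = fun j => algebraMap F E (a j) + algebraMap F E (b j) * β}
            , add_mem' := ?_
            , zero_mem' := ?_
            , smul_mem' := ?_ }, ?_⟩
    · -- C₁ add
      intro x y hx hy
      exact D.add_mem hx hy
    · exact D.zero_mem
    · intro s x hx
      exact D.smul_mem s hx
    · -- C₂ add
      rintro x y ⟨a, b, hm, rfl⟩ ⟨a', b', hm', rfl⟩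
      refine ⟨a + a', b + b', ?_, ?_⟩
      · have := D.add_mem hm hm'
        convert this using 1
        funext i j
        fin_cases i <;>
          simp [Matrix.cons_val_zero, Matrix.cons_val_one, Matrix.head_cons, Pi.add_apply,
            Pi.smul_apply, smul_eq_mul,
            show ((0:Fin 3)-1) = 2 from rfl, show ((1:Fin 3)-1) = 0 from rfl,
            show ((2:Fin 3)-1) = 1 from rfl, show ((-1:Fin 3)) = 2 from rfl] <;>
          (first | rfl | ring1 | linear_combination (a j) * h2F | linear_combination (-(a j)) * h2F | linear_combination (b j) * h2F | linear_combination (-(b j)) * h2F | linear_combination (a' j) * h2F | linear_combination (-(a' j)) * h2F | linear_combination (b' j) * h2F | linear_combination (-(b' j)) * h2F)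
      · funext j
        simp [map_add]
        ring
    · -- C₂ zero
      refine ⟨0, 0, ?_, ?_⟩
      · have h00 : ((0 : Fin ℓ → F) + 0) = 0 := add_zero 0
        rw [h00]
        have : (![(0 : Fin ℓ → F), 0, 0]) = 0 := by
          funext i j
          fin_cases i <;> rfl
        rw [this]; exact D.zero_mem
      · funext j; simp
    · -- C₂ smul
      rintro s x ⟨a, b, hm, rfl⟩
      obtain ⟨p, r, hs⟩ := hE s
      -- shifted version of ![b,a,a+b] is ![a+b, b, a]
      have hshift : (![a + b, b, a] : Fin 3 → Fin ℓ → F) ∈ D := by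
        have := hD _ hm
        convert this using 1
        funext i j
        fin_cases i <;>
          simp [Matrix.cons_val_zero, Matrix.cons_val_one, Matrix.head_cons, Pi.add_apply,
            Pi.smul_apply, smul_eq_mul,
            show ((0:Fin 3)-1) = 2 from rfl, show ((1:Fin 3)-1) = 0 from rfl,
            show ((2:Fin 3)-1) = 1 from rfl, show ((-1:Fin 3)) = 2 from rfl] <;>
          (first | rfl | ring1 | linear_combination (a j) * h2F | linear_combination (-(a j)) * h2F | linear_combination (b j) * h2F | linear_combination (-(b j)) * h2F)
      refine ⟨(fun j => p * a j + r * b j), (fun j => p * b j + r * a j + r * b j), ?_, ?_⟩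
      · have hcomb := D.add_mem (D.smul_mem p hm) (D.smul_mem r hshift)
        convert hcomb using 1
        funext i j
        fin_cases i <;>
          simp [Matrix.cons_val_zero, Matrix.cons_val_one, Matrix.head_cons, Pi.add_apply,
            Pi.smul_apply, smul_eq_mul,
            show ((0:Fin 3)-1) = 2 from rfl, show ((1:Fin 3)-1) = 0 from rfl,
            show ((2:Fin 3)-1) = 1 from rfl, show ((-1:Fin 3)) = 2 from rfl] <;>
          (first | rfl | ring1 | linear_combination (r * b j) * h2F | linear_combination (-(r * b j)) * h2F | linear_combination (p * b j) * h2F | linear_combination (-(p * b j)) * h2F | linear_combination (r * a j) * h2F | linear_combination (-(r * a j)) * h2F | linear_combination (p * a j) * h2F | linear_combination (-(p * a j)) * h2F)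
      · funext j
        simp only [Pi.smul_apply, smul_eq_mul, map_add, map_mul]
        linear_combination (algebraMap F E (a j) + algebraMap F E (b j) * β) * hs
          + algebraMap F E r * algebraMap F E (b j) * hβ2
    · -- the main set equality
      ext c
      simp only [SetLike.mem_coe]
      constructor
      · intro hc
        refine ⟨c 0 + c 1 + c 2, c 0 + c 2, c 1 + c 2, ?_, ?_, ?_, ?_, ?_⟩
        · -- z ∈ C₁ : (fun _ => z) ∈ D
          show (fun _ : Fin 3 => c 0 + c 1 + c 2) ∈ D
          have hmem := D.add_mem (D.add_mem hc (hD c hc)) (hD _ (hD c hc))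
          convert hmem using 1
          funext i j
          fin_cases i <;>
            simp [Matrix.cons_val_zero, Matrix.cons_val_one, Matrix.head_cons, Pi.add_apply,
            Pi.smul_apply, smul_eq_mul,
            show ((0:Fin 3)-1) = 2 from rfl, show ((1:Fin 3)-1) = 0 from rfl,
            show ((2:Fin 3)-1) = 1 from rfl, show ((-1:Fin 3)) = 2 from rfl] <;>
          (first | rfl | ring1 | linear_combination (c 0 j) * h2F | linear_combination (-(c 0 j)) * h2F | linear_combination (c 1 j) * h2F | linear_combination (-(c 1 j)) * h2F | linear_combination (c 2 j) * h2F | linear_combination (-(c 2 j)) * h2F | linear_combination (c 0 j + c 1 j) * h2F | linear_combination (-(c 0 j + c 1 j)) * h2F | linear_combination (c 0 j + c 2 j) * h2F | linear_combination (-(c 0 j + c 2 j)) * h2F | linear_combination (c 1 j + c 2 j) * h2F | linear_combination (-(c 1 j + c 2 j)) * h2F)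
        · -- ψ(a,b) ∈ C₂
          refine ⟨c 0 + c 2, c 1 + c 2, ?_, rfl⟩
          have hmem := D.add_mem (hD c hc) (hD _ (hD c hc))
          convert hmem using 1
          funext i j
          fin_cases i <;>
            simp [Matrix.cons_val_zero, Matrix.cons_val_one, Matrix.head_cons, Pi.add_apply,
            Pi.smul_apply, smul_eq_mul,
            show ((0:Fin 3)-1) = 2 from rfl, show ((1:Fin 3)-1) = 0 from rfl,
            show ((2:Fin 3)-1) = 1 from rfl, show ((-1:Fin 3)) = 2 from rfl] <;>
          (first | rfl | ring1 | linear_combination (c 0 j) * h2F | linear_combination (-(c 0 j)) * h2F | linear_combination (c 1 j) * h2F | linear_combination (-(c 1 j)) * h2F | linear_combination (c 2 j) * h2F | linear_combination (-(c 2 j)) * h2F | linear_combination (c 0 j + c 1 j) * h2F | linear_combination (-(c 0 j + c 1 j)) * h2F | linear_combination (c 0 j + c 2 j) * h2F | linear_combination (-(c 0 j + c 2 j)) * h2F | linear_combination (c 1 j + c 2 j) * h2F | linear_combination (-(c 1 j + c 2 j)) * h2F)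
        · funext j
          simp only [Pi.add_apply]
          linear_combination -hFadd (c 1 j) - hFadd (c 2 j)
        · funext j
          simp only [Pi.add_apply]
          linear_combination -hFadd (c 0 j) - hFadd (c 2 j)
        · funext j
          simp only [Pi.add_apply]
          linear_combination -hFadd (c 0 j) - hFadd (c 1 j) - hFadd (c 2 j)
      · rintro ⟨z, a, b, hz, ⟨a', b', hm', hfun⟩, h0, h1, h2⟩
        have hab : a = a' ∧ b = b' := by
          have hall : ∀ j, a j = a' j ∧ b j = b' j := by
            intro j
            have hj := congrFun hfun j
            have := hinj (a j - a' j) (b j - b' j) (by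
              simp only [map_sub]
              linear_combination hj)
            exact ⟨sub_eq_zero.mp this.1, sub_eq_zero.mp this.2⟩
          exact ⟨funext fun j => (hall j).1, funext fun j => (hall j).2⟩
        obtain ⟨ha, hb⟩ := hab
        subst ha; subst hb
        have hmem := D.add_mem hz hm'
        convert hmem using 1
        funext i j
        fin_cases i <;>
          simp [h0, h1, h2, Matrix.cons_val_zero, Matrix.cons_val_one, Matrix.head_cons,
            Pi.add_apply] <;>
          (first | rfl | ring1 | linear_combination (a j) * h2F | linear_combination (-(a j)) * h2F | linear_combination (b j) * h2F | linear_combination (-(b j)) * h2F | linear_combination (z j) * h2F | linear_combination (-(z j)) * h2F | linear_combination (a j + b j) * h2F | linear_combination (-(a j + b j)) * h2F)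
end
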